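/- Let n ≥ 1, ℓ = 2^n - 1, and let (g_1,…,g_ℓ) be squarefree, pairwise coprime positive integers, each g_i > 1. Index nonzero vectors v_1,…,v_ℓ of 𝔽_2^n by binary expansion, and set a_j = ∏_{i : v_i · e_j = 1} g_i for j = 1,…,n where e_j is the j-th standard basis vector. Then the classes of a_1,…,a_n in ℚ^×/(ℚ^×)² are linearly independent over 𝔽_2. -/

import Mathlib

/-!
Take `j₀ ∈ J` and the index `i₀` with `i₀ + 1 = 2 ^ j₀`, i.e. `v_{i₀} = e_{j₀}`. Then `g i₀` occurs
in `a j₀` and in no other `a j`. A prime `p ∣ g i₀` divides `g i₀` exactly once (squarefree) and no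
other `g i` (coprimality), so `p` divides `∏_{j ∈ J} a j` exactly once and the product is no square.
-/

open Finset

namespace Nat

lemma even_factorization_of_isSquare {m : ℕ} (hm : IsSquare m) (p : ℕ) :
    Even (m.factorization p) := by
  obtain ⟨r, rfl⟩ := hm
  rcases eq_or_ne r 0 with rfl | hr
  · simp
  · rw [factorization_mul hr hr, Finsupp.add_apply]
    exact ⟨_, rfl⟩

section PairwiseCoprime

variable {ι κ : Type*} {g : ι → ℕ} {i₀ : ι}

lemma ne_zero_of_coprime_of_one_lt (hcop : ∀ i j, i ≠ j → Coprime (g i) (g j)) (hg : 1 < g i₀)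
    (i : ι) : g i ≠ 0 := by
  intro hi
  rcases eq_or_ne i i₀ with rfl | h
  · omega
  · have := hcop i i₀ h
    rw [hi, coprime_zero_left] at this
    omega

variable [DecidableEq ι]

lemma factorization_apply_eq_ite_of_coprime (hcop : ∀ i j, i ≠ j → Coprime (g i) (g j))
    (hsf : Squarefree (g i₀)) {p : ℕ} (hp : p.Prime) (hpd : p ∣ g i₀) (i : ι) :
    (g i).factorization p = if i = i₀ then 1 else 0 := by
  split_ifs with h
  · subst h
    have hpos : 1 ≤ (g i).factorization p :=
      (hp.dvd_iff_one_le_factorization hsf.ne_zero).1 hpd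
    have := hsf.natFactorization_le_one p
    omega
  · refine factorization_eq_zero_of_not_dvd fun hpi => hp.one_lt.ne' ?_
    exact Coprime.eq_one_of_dvd (Coprime.coprime_dvd_left hpi (hcop i i₀ h)) hpd

lemma factorization_prod_prod_eq_card (hcop : ∀ i j, i ≠ j → Coprime (g i) (g j))
    (hsf : Squarefree (g i₀)) (hg : 1 < g i₀) {p : ℕ} (hp : p.Prime) (hpd : p ∣ g i₀)
    (S : κ → Finset ι) (J : Finset κ) :
    (∏ j ∈ J, ∏ i ∈ S j, g i).factorization p = #{j ∈ J | i₀ ∈ S j} := by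
  have hne := ne_zero_of_coprime_of_one_lt hcop hg
  rw [factorization_prod fun j _ => prod_ne_zero_iff.2 fun i _ => hne i, Finsupp.finsetSum_apply]
  simp only [factorization_prod fun i _ => hne i, Finsupp.finsetSum_apply,
    factorization_apply_eq_ite_of_coprime hcop hsf hp hpd, sum_ite_eq', sum_boole, Nat.cast_id]

theorem not_isSquare_prod_prod (hcop : ∀ i j, i ≠ j → Coprime (g i) (g j))
    (hsf : Squarefree (g i₀)) (hg : 1 < g i₀) (S : κ → Finset ι) (J : Finset κ)
    (hodd : Odd #{j ∈ J | i₀ ∈ S j}) :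
    ¬IsSquare (∏ j ∈ J, ∏ i ∈ S j, g i) := by
  intro hsq
  have heven := even_factorization_of_isSquare hsq (g i₀).minFac
  rw [factorization_prod_prod_eq_card hcop hsf hg (minFac_prime hg.ne') (minFac_dvd _)] at heven
  exact not_even_iff_odd.2 hodd heven

end PairwiseCoprime

lemma testBit_two_pow_sub_one_add_one (k j : ℕ) : (2 ^ k - 1 + 1).testBit j = decide (k = j) := by
  rw [Nat.sub_add_cancel Nat.one_le_two_pow, testBit_two_pow]

end Nat

theorem stmt_10_general (n : ℕ) (g : Fin (2 ^ n - 1) → ℕ)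
    (hsf : ∀ i, Squarefree (g i))
    (hcop : ∀ i j, i ≠ j → Nat.Coprime (g i) (g j))
    (hg : ∀ i, 1 < g i)
    -- `a j = ∏_{i : v_i · e_j = 1} g_i`, where the nonzero vector `v_i ∈ 𝔽₂ⁿ`
    -- is the binary expansion of `i + 1`, so `v_i · e_j = 1` iff bit `j` of `i+1` is set
    (a : Fin n → ℕ)
    (ha : ∀ j : Fin n,
      a j = ∏ i ∈ Finset.univ.filter
        (fun i : Fin (2 ^ n - 1) => Nat.testBit ((i : ℕ) + 1) (j : ℕ)), g i)
    (J : Finset (Fin n)) (hJ : IsSquare (∏ j ∈ J, a j)) : J = ∅ := by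
  rw [← not_nonempty_iff_eq_empty]
  rintro ⟨j₀, hj₀⟩
  let i₀ : Fin (2 ^ n - 1) := ⟨2 ^ (j₀ : ℕ) - 1,
    Nat.sub_lt_sub_right Nat.one_le_two_pow (Nat.pow_lt_pow_right one_lt_two j₀.2)⟩
  have hunique :
      {j ∈ J | i₀ ∈ univ.filter fun i : Fin (2 ^ n - 1) => (i + 1 : ℕ).testBit (j : Fin n)} =
        {j₀} := by
    ext j
    simp only [i₀, mem_filter, mem_univ, true_and, mem_singleton,
      Nat.testBit_two_pow_sub_one_add_one, decide_eq_true_eq, Fin.val_inj]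
    exact ⟨fun h => h.2.symm, fun h => ⟨h ▸ hj₀, h.symm⟩⟩
  refine Nat.not_isSquare_prod_prod hcop (hsf i₀) (hg i₀) _ J ?_ (by simpa only [ha] using hJ)
  rw [hunique, card_singleton]
  exact odd_one

theorem stmt_10 (n : ℕ) (hn : 1 ≤ n) (g : Fin (2 ^ n - 1) → ℕ)
    (hsf : ∀ i, Squarefree (g i))
    (hcop : ∀ i j, i ≠ j → Nat.Coprime (g i) (g j))
    (hg : ∀ i, 1 < g i)
    -- `a j = ∏_{i : v_i · e_j = 1} g_i`, where the nonzero vector `v_i ∈ 𝔽₂ⁿ`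
    -- is the binary expansion of `i + 1`, so `v_i · e_j = 1` iff bit `j` of `i+1` is set
    (a : Fin n → ℕ)
    (ha : ∀ j : Fin n,
      a j = ∏ i ∈ Finset.univ.filter
        (fun i : Fin (2 ^ n - 1) => Nat.testBit ((i : ℕ) + 1) (j : ℕ)), g i)
    (J : Finset (Fin n)) (hJ : IsSquare (∏ j ∈ J, a j)) : J = ∅ :=
  stmt_10_general n g hsf hcop hg a ha J hJ
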